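/- Fix α ∈ (0,π) and x ∈ (0,π). Let C := min(|sin x|, |sin α|) > 0. Then there exists δ > 0 such that for all (s,u) in the Euclidean ball of radius δ around (α, x), |g_x^α(s,u)| ≤ (4/C)·|s−α|/((s−α)² + (u−x)²), where g_x^α(s,u) = sin(x)·sin((s−α)/2)·sin((s+α)/2) / ( sin²((u−x)/2)·sin²((s+α)/2) + sin²((u+x)/2)·sin²((s−α)/2) ). -/

import Mathlib

open Real

noncomputable def gfun (α x s u : ℝ) : ℝ :=
  Real.sin x * Real.sin ((s - α) / 2) * Real.sin ((s + α) / 2) /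
    (Real.sin ((u - x) / 2) ^ 2 * Real.sin ((s + α) / 2) ^ 2
      + Real.sin ((u + x) / 2) ^ 2 * Real.sin ((s - α) / 2) ^ 2)

/-!
Write `s = α + d`, `u = x + e`, `r² = d² + e²`. Near `(α, x)` the factors `sin ((s + α) / 2)` and
`sin ((u + x) / 2)` stay within `C / 8` of `sin α ≥ C` and `sin x ≥ C`, while `|sin (d / 2)|` and
`|sin (e / 2)|` are comparable to `|d| / 2` and `|e| / 2`. So the numerator is
`O(sin x · sin α · |d|) = O(C |d|)` and the denominator is `≳ C² r²`; with `δ = C / 4` the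
constant comes out as `9216 / 2401 ≤ 4`.
-/

lemma mul_le_min_of_le_one {p q : ℝ} (hp : 0 ≤ p) (hq : 0 ≤ q) (hp1 : p ≤ 1) (hq1 : q ≤ 1) :
    p * q ≤ min p q :=
  le_min (mul_le_of_le_one_right hp hq1) (mul_le_of_le_one_left hq hp1)

lemma abs_mul_one_sub_sq_div_six_le_abs_sin (y : ℝ) : |y| * (1 - y ^ 2 / 6) ≤ |sin y| := by
  have h := (abs_sub_abs_le_abs_sub y (sin y)).trans (abs_sub_sin_le y)
  have hy3 : |y| ^ 3 = |y| * y ^ 2 := by rw [pow_succ', sq_abs]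
  linarith

lemma mul_abs_le_abs_sin_half {t : ℝ} (ht : |t| ≤ 1) : 7 / 16 * |t| ≤ |sin (t / 2)| := by
  have h := abs_mul_one_sub_sq_div_six_le_abs_sin (t / 2)
  have ht2 : t ^ 2 ≤ 1 := by nlinarith [sq_abs t, abs_nonneg t]
  rw [abs_div, abs_two] at h
  nlinarith [abs_nonneg t]

lemma sq_le_sin_half_sq {t : ℝ} (ht : |t| ≤ 1) : (7 / 16) ^ 2 * t ^ 2 ≤ sin (t / 2) ^ 2 := by
  rw [← sq_abs t, ← mul_pow, ← sq_abs (sin _)]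
  exact pow_le_pow_left₀ (by positivity) (mul_abs_le_abs_sin_half ht) 2

lemma sin_half_add_mem_Icc {s α C : ℝ} (hC : C ≤ sin α) (hs : |s - α| ≤ C / 4) :
    sin ((s + α) / 2) ∈ Set.Icc (7 / 8 * C) (9 / 8 * sin α) := by
  have h := abs_sin_sub_sin_le ((s + α) / 2) α
  rw [show (s + α) / 2 - α = (s - α) / 2 by ring, abs_div, abs_two] at h
  constructor <;> linarith [(abs_le.mp h).1, (abs_le.mp h).2]

lemma abs_gfun_num_le {α x s C : ℝ} (hx : 0 ≤ sin x) (hC : C ≤ sin α)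
    (hprod : sin x * sin α ≤ C) (hs : |s - α| ≤ C / 4) :
    |sin x * sin ((s - α) / 2) * sin ((s + α) / 2)| ≤ 9 / 16 * C * |s - α| := by
  obtain ⟨hB₀, hB₁⟩ := sin_half_add_mem_Icc hC hs
  have hB : 0 ≤ sin ((s + α) / 2) := by linarith [abs_nonneg (s - α)]
  have ha : |sin ((s - α) / 2)| ≤ |s - α| / 2 := by
    simpa [abs_div] using abs_sin_le_abs (x := (s - α) / 2)
  rw [abs_mul, abs_mul, abs_of_nonneg hx, abs_of_nonneg hB]
  calc sin x * |sin ((s - α) / 2)| * sin ((s + α) / 2)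
      ≤ sin x * (|s - α| / 2) * (9 / 8 * sin α) := by gcongr
    _ = 9 / 16 * (sin x * sin α) * |s - α| := by ring
    _ ≤ 9 / 16 * C * |s - α| := by gcongr

lemma gfun_denom_ge {α x s u C : ℝ} (hCα : C ≤ sin α) (hCx : C ≤ sin x)
    (hs : |s - α| ≤ C / 4) (hu : |u - x| ≤ C / 4) :
    (7 / 8 * C) ^ 2 * ((7 / 16) ^ 2 * ((s - α) ^ 2 + (u - x) ^ 2)) ≤
      sin ((u - x) / 2) ^ 2 * sin ((s + α) / 2) ^ 2
        + sin ((u + x) / 2) ^ 2 * sin ((s - α) / 2) ^ 2 := by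
  have hC : 0 ≤ 7 / 8 * C := by linarith [abs_nonneg (s - α)]
  have hs1 : |s - α| ≤ 1 := by linarith [sin_le_one α]
  have hu1 : |u - x| ≤ 1 := by linarith [sin_le_one x]
  have hB := (sin_half_add_mem_Icc hCα hs).1
  have hA := (sin_half_add_mem_Icc hCx hu).1
  calc (7 / 8 * C) ^ 2 * ((7 / 16) ^ 2 * ((s - α) ^ 2 + (u - x) ^ 2))
      = (7 / 16) ^ 2 * (u - x) ^ 2 * (7 / 8 * C) ^ 2
        + (7 / 8 * C) ^ 2 * ((7 / 16) ^ 2 * (s - α) ^ 2) := by ring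
    _ ≤ _ := by gcongr <;> exact sq_le_sin_half_sq ‹_›

theorem gfun_local_bound (α x : ℝ) (hα : α ∈ Set.Ioo 0 π) (hx : x ∈ Set.Ioo 0 π) :
    ∃ δ > 0, ∀ s u : ℝ, (s - α) ^ 2 + (u - x) ^ 2 < δ ^ 2 →
      |gfun α x s u| ≤ (4 / min |Real.sin x| |Real.sin α|) *
        (|s - α| / ((s - α) ^ 2 + (u - x) ^ 2)) := by
  have hSx : 0 < sin x := sin_pos_of_pos_of_lt_pi hx.1 hx.2
  have hSα : 0 < sin α := sin_pos_of_pos_of_lt_pi hα.1 hα.2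
  rw [abs_of_pos hSx, abs_of_pos hSα]
  set C := min (sin x) (sin α)
  have hC : 0 < C := lt_min hSx hSα
  have hprod : sin x * sin α ≤ C :=
    mul_le_min_of_le_one hSx.le hSα.le (sin_le_one x) (sin_le_one α)
  refine ⟨C / 4, by positivity, fun s u h => ?_⟩
  have hs : |s - α| ≤ C / 4 := abs_le_of_sq_le_sq (by nlinarith) (by positivity)
  have hu : |u - x| ≤ C / 4 := abs_le_of_sq_le_sq (by nlinarith) (by positivity)
  rcases (add_nonneg (sq_nonneg (s - α)) (sq_nonneg (u - x))).eq_or_lt with hr | hr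
  · obtain rfl : s = α := by nlinarith
    simp [gfun]
  have hden := gfun_denom_ge (min_le_right _ _) (min_le_left _ _) hs hu
  rw [gfun, abs_div, abs_of_pos (lt_of_lt_of_le (by positivity) hden)]
  calc _ ≤ 9 / 16 * C * |s - α| /
          ((7 / 8 * C) ^ 2 * ((7 / 16) ^ 2 * ((s - α) ^ 2 + (u - x) ^ 2))) :=
        div_le_div₀ (by positivity) (abs_gfun_num_le hSx.le (min_le_right _ _) hprod hs)
          (by positivity) hden
    _ = 9216 / 2401 / C * (|s - α| / ((s - α) ^ 2 + (u - x) ^ 2)) := by field_simp; ring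
    _ ≤ _ := by gcongr; norm_num
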